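/- Suppose 1/2 < σ < 1. Define g(T) = ∫_{(0,∞)^p} ψ(2Tw₁, …, 2Tw_p) ρ(dw). Then g(T) = O(T^{(1+σ)/2}) as T → ∞: there exist a constant C < ∞ and T₀ > 0 such that g(T) ≤ C T^{(1+σ)/2} for all T ≥ T₀. Consequently the expected number of edges E[E_{α,T}] = (α²/2) g(T) satisfies E[E_{α,T}] = O(T^{(1+σ)/2}) as T → ∞ for any fixed α > 0. -/

import Mathlib

open MeasureTheory Real Filter

/-- The Lévy measure of a generalized gamma process: the measure on `(0,∞)` with density
`w ↦ w^(-1-σ) * exp(-τ*w) / Γ(1-σ)` with respect to Lebesgue measure. -/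
noncomputable def rho0 (σ τ : ℝ) : Measure ℝ :=
  ((volume : Measure ℝ).restrict (Set.Ioi 0)).withDensity
    (fun w => ENNReal.ofReal (w ^ (-1 - σ) * Real.exp (-τ * w) / Real.Gamma (1 - σ)))

/-- The Gamma(a,b) probability measure on `(0,∞)`, with density
`x ↦ b^a x^(a−1) e^(−b x) / Γ(a)` with respect to Lebesgue measure. -/
noncomputable def gammaM (a b : ℝ) : Measure ℝ :=
  ((volume : Measure ℝ).restrict (Set.Ioi 0)).withDensity
    (fun x => ENNReal.ofReal (b ^ a * x ^ (a - 1) * Real.exp (-b * x) / Real.Gamma a))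

/-- The multivariate Lévy measure `ρ` of the compound CRM with independent gamma scores:
the pushforward of `ρ₀ ⊗ Gamma(a₁,b₁) ⊗ ⋯ ⊗ Gamma(a_p,b_p)` under
`(w₀, β₁, …, β_p) ↦ (w₀β₁, …, w₀β_p)`. -/
noncomputable def rhoC (σ τ : ℝ) (p : ℕ) (a b : Fin p → ℝ) : Measure (Fin p → ℝ) :=
  Measure.map (fun x : ℝ × (Fin p → ℝ) => fun k => x.1 * x.2 k)
    ((rho0 σ τ).prod (Measure.pi fun k => gammaM (a k) (b k)))

/-- The Laplace exponent `ψ(t) = ∫ (1 − e^{−Σ_k t_k v_k}) ρ(dv)` of the compound CRM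
(a finite quantity, expressed here as a Bochner integral). -/
noncomputable def psi (σ τ : ℝ) (p : ℕ) (a b : Fin p → ℝ) (t : Fin p → ℝ) : ℝ :=
  ∫ v, (1 - Real.exp (-∑ k, t k * v k)) ∂(rhoC σ τ p a b)

/-- `g(T) = ∫ ψ(2Tw₁,…,2Tw_p) ρ(dw)`, so that `E[E_{α,T}] = (α²/2) g(T)`. -/
noncomputable def edgesIntegral (σ τ : ℝ) (p : ℕ) (a b : Fin p → ℝ) (T : ℝ) : ℝ :=
  ∫ w, psi σ τ p a b (fun k => 2 * T * w k) ∂(rhoC σ τ p a b)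

/-! Since `1 - exp (-s) ≤ s ^ θ` for `0 < θ ≤ 1` and `∑ tₖ vₖ ≤ (∑ tₖ) (∑ vₖ)` for nonnegative
vectors, `ψ t ≤ (∑ tₖ) ^ θ * M θ` with `M θ = ∫ (∑ vₖ) ^ θ dρ`. The moment `M θ` factorises as
`∫ w ^ θ dρ₀ * E[(∑ βₖ) ^ θ]`; the first factor is finite as soon as `θ > σ`, since `ρ₀` only has
the singularity `w ^ (-1 - σ)` at the origin, and the second one as soon as `θ ≤ 1`, since
`(∑ βₖ) ^ θ ≤ 1 + ∑ βₖ`. Integrating the bound on `ψ` once more against `ρ` gives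
`g T ≤ (2 T) ^ θ * (M θ) ^ 2`, and `θ = (1 + σ) / 2` is admissible. -/

open Set ProbabilityTheory

instance sigmaFinite_gammaM (a b : ℝ) : SigmaFinite (gammaM a b) :=
  SigmaFinite.withDensity_ofReal _

lemma one_sub_exp_neg_le_rpow {s θ : ℝ} (hs : 0 ≤ s) (hθ0 : 0 < θ) (hθ1 : θ ≤ 1) :
    1 - exp (-s) ≤ s ^ θ := by
  rcases le_or_gt s 1 with hs1 | hs1
  · calc 1 - exp (-s) ≤ s := by linarith [add_one_le_exp (-s)]
      _ ≤ s ^ θ := self_le_rpow_of_le_one hs hs1 hθ1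
  · linarith [exp_pos (-s), one_le_rpow hs1.le hθ0.le]

lemma rpow_le_one_add {x θ : ℝ} (hx : 0 ≤ x) (hθ0 : 0 ≤ θ) (hθ1 : θ ≤ 1) : x ^ θ ≤ 1 + x := by
  rcases le_or_gt x 1 with hx1 | hx1
  · linarith [rpow_le_one hx hx1 hθ0]
  · linarith [rpow_le_self_of_one_le hx1.le hθ1]

lemma integrableOn_rpow_mul_exp_neg_mul {s b : ℝ} (hs : -1 < s) (hb : 0 < b) :
    IntegrableOn (fun x : ℝ => x ^ s * exp (-b * x)) (Ioi 0) := by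
  simpa using integrableOn_rpow_mul_exp_neg_mul_rpow hs one_pos hb

lemma integrable_withDensity_ofReal_restrict {α : Type*} [MeasurableSpace α] {μ : Measure α}
    {s : Set α} (hs : MeasurableSet s) {d g : α → ℝ} (hd : Measurable d)
    (hd0 : ∀ x ∈ s, 0 ≤ d x) (hg : IntegrableOn (fun x => g x * d x) s μ) :
    Integrable g ((μ.restrict s).withDensity fun x => ENNReal.ofReal (d x)) := by
  rw [integrable_withDensity_iff hd.ennreal_ofReal (.of_forall fun _ => ENNReal.ofReal_lt_top)]
  exact hg.congr_fun (fun x hx => by rw [ENNReal.toReal_ofReal (hd0 x hx)]) hs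

lemma ae_pos_rho0 (σ τ : ℝ) : ∀ᵐ w ∂rho0 σ τ, 0 < w :=
  (withDensity_absolutelyContinuous _ _).ae_le (ae_restrict_mem measurableSet_Ioi)

lemma integrable_rpow_rho0 {σ τ θ : ℝ} (hσ : σ < 1) (hτ : 0 < τ) (hθ : σ < θ) :
    Integrable (fun w : ℝ => w ^ θ) (rho0 σ τ) := by
  have hΓ : 0 < Gamma (1 - σ) := Gamma_pos_of_pos (by linarith)
  refine integrable_withDensity_ofReal_restrict measurableSet_Ioi (by fun_prop)
    (fun w hw => by have : (0 : ℝ) < w := hw; positivity) ?_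
  have hbase := integrableOn_rpow_mul_exp_neg_mul (s := θ - σ - 1) (by linarith) hτ
  refine IntegrableOn.congr_fun (hbase.div_const (Gamma (1 - σ))) (fun w (hw : 0 < w) => ?_)
    measurableSet_Ioi
  rw [show θ - σ - 1 = θ + (-1 - σ) by ring, rpow_add hw]
  ring

lemma gammaM_eq_gammaMeasure (a b : ℝ) : gammaM a b = gammaMeasure a b := by
  rw [gammaM, ← withDensity_indicator measurableSet_Ioi, gammaMeasure]
  refine withDensity_congr_ae ?_
  filter_upwards [compl_mem_ae_iff.2 (measure_singleton (0 : ℝ))] with x hx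
  rcases lt_or_gt_of_ne (show x ≠ 0 from hx) with hx0 | hx0
  · simp [gammaPDF_of_neg hx0, hx0.not_gt]
  · simp only [indicator_of_mem (show x ∈ Ioi 0 from hx0), gammaPDF_of_nonneg hx0.le]
    rw [neg_mul]
    congr 1
    ring

lemma isProbabilityMeasure_gammaM {a b : ℝ} (ha : 0 < a) (hb : 0 < b) :
    IsProbabilityMeasure (gammaM a b) :=
  gammaM_eq_gammaMeasure a b ▸ isProbabilityMeasure_gammaMeasure ha hb

lemma ae_pos_gammaM (a b : ℝ) : ∀ᵐ x ∂gammaM a b, 0 < x :=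
  (withDensity_absolutelyContinuous _ _).ae_le (ae_restrict_mem measurableSet_Ioi)

lemma integrable_rpow_gammaM {a b θ : ℝ} (ha : 0 < a) (hb : 0 < b) (hθ : -a < θ) :
    Integrable (fun x : ℝ => x ^ θ) (gammaM a b) := by
  refine integrable_withDensity_ofReal_restrict measurableSet_Ioi (by fun_prop)
    (fun x hx => by have : (0 : ℝ) < x := hx; have := Gamma_pos_of_pos ha; positivity) ?_
  have hbase := integrableOn_rpow_mul_exp_neg_mul (s := a + θ - 1) (by linarith) hb
  refine IntegrableOn.congr_fun (hbase.const_mul (b ^ a / Gamma a)) (fun x (hx : 0 < x) => ?_)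
    measurableSet_Ioi
  rw [show a + θ - 1 = θ + (a - 1) by ring, rpow_add hx]
  ring

section Pi

variable {ι : Type*} [Fintype ι] {μ : ι → Measure ℝ}

lemma ae_forall_pi [∀ i, SigmaFinite (μ i)] {P : ι → ℝ → Prop} (h : ∀ i, ∀ᵐ x ∂μ i, P i x) :
    ∀ᵐ β ∂Measure.pi μ, ∀ i, P i (β i) :=
  Measure.ae_pi_le_pi (Filter.eventually_pi h)

lemma integrable_rpow_sum_pi [∀ i, IsProbabilityMeasure (μ i)] (hpos : ∀ i, ∀ᵐ x ∂μ i, 0 ≤ x)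
    (hint : ∀ i, Integrable id (μ i)) {θ : ℝ} (hθ0 : 0 ≤ θ) (hθ1 : θ ≤ 1) :
    Integrable (fun β : ι → ℝ => (∑ i, β i) ^ θ) (Measure.pi μ) := by
  have hsum : Integrable (fun β : ι → ℝ => 1 + ∑ i, β i) (Measure.pi μ) :=
    (integrable_const 1).add (integrable_finsetSum _ fun i _ =>
      (measurePreserving_eval μ i).integrable_comp_of_integrable (hint i))
  refine hsum.mono' (by fun_prop : Measurable _).aestronglyMeasurable ?_
  filter_upwards [ae_forall_pi hpos] with β hβ
  have hβsum : 0 ≤ ∑ i, β i := Finset.sum_nonneg fun i _ => hβ i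
  rw [norm_of_nonneg (rpow_nonneg hβsum θ)]
  exact rpow_le_one_add hβsum hθ0 hθ1

end Pi

lemma sum_mul_le_sum_mul_sum {ι : Type*} (s : Finset ι) {t v : ι → ℝ} (ht : ∀ i ∈ s, 0 ≤ t i)
    (hv : ∀ i ∈ s, 0 ≤ v i) : ∑ i ∈ s, t i * v i ≤ (∑ i ∈ s, t i) * ∑ i ∈ s, v i := by
  rw [Finset.sum_mul]
  exact Finset.sum_le_sum fun i hi =>
    mul_le_mul_of_nonneg_left (Finset.single_le_sum hv hi) (ht i hi)

lemma integral_one_sub_exp_neg_le {ι : Type*} [Fintype ι] {μ : Measure (ι → ℝ)}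
    (hμ : ∀ᵐ v ∂μ, ∀ i, 0 ≤ v i) {θ : ℝ} (hθ0 : 0 < θ) (hθ1 : θ ≤ 1)
    (hint : Integrable (fun v : ι → ℝ => (∑ i, v i) ^ θ) μ) {t : ι → ℝ} (ht : ∀ i, 0 ≤ t i) :
    ∫ v, (1 - exp (-∑ i, t i * v i)) ∂μ ≤ (∑ i, t i) ^ θ * ∫ v, (∑ i, v i) ^ θ ∂μ := by
  rw [← integral_const_mul]
  have htv : ∀ᵐ v ∂μ, 0 ≤ ∑ i, t i * v i := hμ.mono fun v hv =>
    Finset.sum_nonneg fun i _ => mul_nonneg (ht i) (hv i)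
  refine integral_mono_of_nonneg ?_ (hint.const_mul _) ?_
  · filter_upwards [htv] with v hs
    exact sub_nonneg.2 (exp_le_one_iff.2 (neg_nonpos.2 hs))
  · filter_upwards [hμ, htv] with v hv hs
    calc 1 - exp (-∑ i, t i * v i) ≤ (∑ i, t i * v i) ^ θ := one_sub_exp_neg_le_rpow hs hθ0 hθ1
      _ ≤ ((∑ i, t i) * ∑ i, v i) ^ θ :=
        rpow_le_rpow hs (sum_mul_le_sum_mul_sum _ (fun i _ => ht i) fun i _ => hv i) hθ0.le
      _ = (∑ i, t i) ^ θ * (∑ i, v i) ^ θ :=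
        mul_rpow (Finset.sum_nonneg fun i _ => ht i) (Finset.sum_nonneg fun i _ => hv i)

section Model

variable {σ τ : ℝ} {p : ℕ} {a b : Fin p → ℝ}

lemma ae_pos_rho0_prod_pi :
    ∀ᵐ x ∂(rho0 σ τ).prod (Measure.pi fun k => gammaM (a k) (b k)), 0 < x.1 ∧ ∀ k, 0 < x.2 k :=
  (Measure.quasiMeasurePreserving_fst.ae (ae_pos_rho0 σ τ)).and
    (Measure.quasiMeasurePreserving_snd.ae (ae_forall_pi fun k => ae_pos_gammaM (a k) (b k)))

lemma ae_pos_rhoC : ∀ᵐ v ∂rhoC σ τ p a b, ∀ k, 0 < v k := by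
  rw [rhoC, ae_map_iff (by fun_prop) (by measurability)]
  filter_upwards [ae_pos_rho0_prod_pi] with x hx k
  exact mul_pos hx.1 (hx.2 k)

lemma integrable_rpow_sum_rhoC (hσ : σ < 1) (hτ : 0 < τ) (ha : ∀ k, 0 < a k)
    (hb : ∀ k, 0 < b k) {θ : ℝ} (hθσ : σ < θ) (hθ0 : 0 ≤ θ) (hθ1 : θ ≤ 1) :
    Integrable (fun v : Fin p → ℝ => (∑ k, v k) ^ θ) (rhoC σ τ p a b) := by
  have := fun k => isProbabilityMeasure_gammaM (ha k) (hb k)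
  have hmean : ∀ k, Integrable id (gammaM (a k) (b k)) := fun k =>
    (integrable_rpow_gammaM (θ := 1) (ha k) (hb k) (by linarith [ha k])).congr
      (.of_forall rpow_one)
  rw [rhoC, integrable_map_measure (by fun_prop) (by fun_prop)]
  refine ((integrable_rpow_rho0 hσ hτ hθσ).mul_prod (integrable_rpow_sum_pi
    (fun k => (ae_pos_gammaM _ _).mono fun _ hx => hx.le) hmean hθ0 hθ1)).congr ?_
  filter_upwards [ae_pos_rho0_prod_pi] with x hx
  simp only [Function.comp_apply, ← Finset.mul_sum]
  exact (mul_rpow hx.1.le (Finset.sum_nonneg fun k _ => (hx.2 k).le)).symm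

lemma psi_nonneg {t : Fin p → ℝ} (ht : ∀ k, 0 ≤ t k) : 0 ≤ psi σ τ p a b t := by
  refine integral_nonneg_of_ae ?_
  filter_upwards [ae_pos_rhoC] with v hv
  exact sub_nonneg.2 (exp_le_one_iff.2 (neg_nonpos.2
    (Finset.sum_nonneg fun k _ => mul_nonneg (ht k) (hv k).le)))

lemma edgesIntegral_le (hσ : σ < 1) (hτ : 0 < τ) (ha : ∀ k, 0 < a k) (hb : ∀ k, 0 < b k)
    {θ : ℝ} (hθσ : σ < θ) (hθ0 : 0 < θ) (hθ1 : θ ≤ 1) {T : ℝ} (hT : 0 ≤ T) :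
    edgesIntegral σ τ p a b T
      ≤ 2 ^ θ * (∫ v, (∑ k, v k) ^ θ ∂rhoC σ τ p a b) ^ 2 * T ^ θ := by
  set M := ∫ v, (∑ k, v k) ^ θ ∂rhoC σ τ p a b
  have hint := integrable_rpow_sum_rhoC hσ hτ ha hb hθσ hθ0.le hθ1
  have hψ : ∀ t : Fin p → ℝ, (∀ k, 0 ≤ t k) → psi σ τ p a b t ≤ (∑ k, t k) ^ θ * M :=
    fun t ht => integral_one_sub_exp_neg_le (ae_pos_rhoC.mono fun v hv k => (hv k).le)
      hθ0 hθ1 hint ht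
  calc edgesIntegral σ τ p a b T ≤ ∫ w, (2 * T) ^ θ * M * (∑ k, w k) ^ θ ∂rhoC σ τ p a b := by
        refine integral_mono_of_nonneg ?_ (hint.const_mul _) ?_
        · filter_upwards [ae_pos_rhoC] with w hw
          exact psi_nonneg fun k => by have := hw k; positivity
        · filter_upwards [ae_pos_rhoC] with w hw
          have hw0 : 0 ≤ ∑ k, w k := Finset.sum_nonneg fun k _ => (hw k).le
          calc psi σ τ p a b (fun k => 2 * T * w k) ≤ (∑ k, 2 * T * w k) ^ θ * M :=
                hψ _ fun k => by have := hw k; positivity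
            _ = (2 * T) ^ θ * M * (∑ k, w k) ^ θ := by
                rw [← Finset.mul_sum, mul_rpow (by positivity) hw0]
                ring
    _ = 2 ^ θ * M ^ 2 * T ^ θ := by
        rw [integral_const_mul, mul_rpow zero_le_two hT]
        ring

end Model

theorem edges_growth_sigma_gt_half_general (σ τ : ℝ) (hσ0 : 1 / 2 < σ) (hσ : σ < 1) (hτ : 0 < τ)
    (p : ℕ) (a b : Fin p → ℝ) (ha : ∀ k, 0 < a k) (hb : ∀ k, 0 < b k) :
    (∃ C T₀ : ℝ, 0 < T₀ ∧ ∀ T ≥ T₀,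
      edgesIntegral σ τ p a b T ≤ C * T ^ ((1 + σ) / 2)) ∧
    ∀ α : ℝ, 0 < α → ∃ C' T₁ : ℝ, 0 < T₁ ∧ ∀ T ≥ T₁,
      α ^ 2 / 2 * edgesIntegral σ τ p a b T ≤ C' * T ^ ((1 + σ) / 2) := by
  set C := 2 ^ ((1 + σ) / 2) * (∫ v, (∑ k, v k) ^ ((1 + σ) / 2) ∂rhoC σ τ p a b) ^ 2
  have hbound : ∀ T ≥ (1 : ℝ), edgesIntegral σ τ p a b T ≤ C * T ^ ((1 + σ) / 2) :=
    fun T hT => edgesIntegral_le hσ hτ ha hb (by linarith) (by linarith) (by linarith)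
      (by linarith)
  refine ⟨⟨C, 1, one_pos, hbound⟩, fun α _ => ⟨α ^ 2 / 2 * C, 1, one_pos, fun T hT => ?_⟩⟩
  rw [mul_assoc]
  exact mul_le_mul_of_nonneg_left (hbound T hT) (by positivity)

/-- For `1/2 < σ < 1`, `g(T) = ∫ ψ(2Tw) ρ(dw) = O(T^{(1+σ)/2})` as `T → ∞`; consequently
`E[E_{α,T}] = (α²/2) g(T) = O(T^{(1+σ)/2})` as `T → ∞` for any fixed `α > 0`. -/
theorem edges_growth_sigma_gt_half (σ τ : ℝ) (hσ0 : 1 / 2 < σ) (hσ : σ < 1) (hτ : 0 < τ)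
    (p : ℕ) (hp : 1 ≤ p) (a b : Fin p → ℝ) (ha : ∀ k, 0 < a k) (hb : ∀ k, 0 < b k) :
    (∃ C T₀ : ℝ, 0 < T₀ ∧ ∀ T ≥ T₀,
      edgesIntegral σ τ p a b T ≤ C * T ^ ((1 + σ) / 2)) ∧
    ∀ α : ℝ, 0 < α → ∃ C' T₁ : ℝ, 0 < T₁ ∧ ∀ T ≥ T₁,
      α ^ 2 / 2 * edgesIntegral σ τ p a b T ≤ C' * T ^ ((1 + σ) / 2) :=
  edges_growth_sigma_gt_half_general σ τ hσ0 hσ hτ p a b ha hb
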